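/- arXiv:2212.12815 — 2 statements merged into one kernel-verified Lean document; each statement's English description precedes it below -/
import Mathlib

section
/- Let H be an n-vertex C5-free 3-graph with δ2^+(H) = n/2 containing a K4 on vi, vj, vk, vl. Then at most one of the four sets B_i, B_j, B_k, B_l is non-empty; moreover, if all four are empty then n is divisible by 4. -/
open Finset

/-- The link (co-neighborhood) of the pair `{u,v}`: all `w` with `{u,v,w}` an edge. -/
def link {n : ℕ} (E : Finset (Finset (Fin n))) (u v : Fin n) : Finset (Fin n) :=
  Finset.univ.filter (fun w => ({u, v, w} : Finset (Fin n)) ∈ E)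

/-- `E` is the edge set of a 3-graph: every edge has exactly 3 vertices. -/
def isEdgeSet {n : ℕ} (E : Finset (Finset (Fin n))) : Prop := ∀ e ∈ E, e.card = 3

/-- `E` contains a copy of `C5⁻ = {abc, bcd, cde, dea}`. -/
def hasC5minus {n : ℕ} (E : Finset (Finset (Fin n))) : Prop :=
  ∃ a b c d e : Fin n,
    a ≠ b ∧ a ≠ c ∧ a ≠ d ∧ a ≠ e ∧ b ≠ c ∧ b ≠ d ∧ b ≠ e ∧ c ≠ d ∧ c ≠ e ∧ d ≠ e ∧
    ({a, b, c} : Finset (Fin n)) ∈ E ∧ ({b, c, d} : Finset (Fin n)) ∈ E ∧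
    ({c, d, e} : Finset (Fin n)) ∈ E ∧ ({d, e, a} : Finset (Fin n)) ∈ E

/-- `E` contains a copy of `C5 = {abc, bcd, cde, dea, eab}`. -/
def hasC5 {n : ℕ} (E : Finset (Finset (Fin n))) : Prop :=
  ∃ a b c d e : Fin n,
    a ≠ b ∧ a ≠ c ∧ a ≠ d ∧ a ≠ e ∧ b ≠ c ∧ b ≠ d ∧ b ≠ e ∧ c ≠ d ∧ c ≠ e ∧ d ≠ e ∧
    ({a, b, c} : Finset (Fin n)) ∈ E ∧ ({b, c, d} : Finset (Fin n)) ∈ E ∧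
    ({c, d, e} : Finset (Fin n)) ∈ E ∧ ({d, e, a} : Finset (Fin n)) ∈ E ∧
    ({e, a, b} : Finset (Fin n)) ∈ E

/-- `a, b, c, d` form a `K4` in `E`: all four triples among them are edges. -/
def isK4 {n : ℕ} (E : Finset (Finset (Fin n))) (a b c d : Fin n) : Prop :=
  a ≠ b ∧ a ≠ c ∧ a ≠ d ∧ b ≠ c ∧ b ≠ d ∧ c ≠ d ∧
  ({a, b, c} : Finset (Fin n)) ∈ E ∧ ({a, b, d} : Finset (Fin n)) ∈ E ∧
  ({a, c, d} : Finset (Fin n)) ∈ E ∧ ({b, c, d} : Finset (Fin n)) ∈ E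

/-- `E` contains a copy of `K4⁻ = {abc, abd, acd}`. -/
def hasK4minus {n : ℕ} (E : Finset (Finset (Fin n))) : Prop :=
  ∃ a b c d : Fin n, a ≠ b ∧ a ≠ c ∧ a ≠ d ∧ b ≠ c ∧ b ≠ d ∧ c ≠ d ∧
    ({a, b, c} : Finset (Fin n)) ∈ E ∧ ({a, b, d} : Finset (Fin n)) ∈ E ∧
    ({a, c, d} : Finset (Fin n)) ∈ E

/-- `A`-set of a `K4`: intersection of the three pairwise links of `{x, y, z}`
(the set `A_w` for the fourth vertex `w` of the `K4`). -/
def Aset {n : ℕ} (E : Finset (Finset (Fin n))) (x y z : Fin n) : Finset (Fin n) :=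
  link E x y ∩ link E y z ∩ link E z x

/-- `B`-set of a `K4`: `B_w = N(w,x) ∩ N(w,y) ∩ N(w,z)`. -/
def Bset {n : ℕ} (E : Finset (Finset (Fin n))) (w x y z : Fin n) : Finset (Fin n) :=
  link E w x ∩ link E w y ∩ link E w z

section
variable {n : ℕ} {E : Finset (Finset (Fin n))}

lemma mem_link_iff {u v w : Fin n} : w ∈ link E u v ↔ ({u,v,w} : Finset (Fin n)) ∈ E := by
  simp [link]

lemma tri_comm (a b c : Fin n) : ({a,b,c} : Finset (Fin n)) = {b,a,c} := by
  ext s; simp; tauto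

lemma tri_right (a b c : Fin n) : ({a,b,c} : Finset (Fin n)) = {a,c,b} := by
  ext s; simp; tauto

lemma tri_rot (a b c : Fin n) : ({a,b,c} : Finset (Fin n)) = {b,c,a} := by
  ext s; simp; tauto

lemma link_comm (u v : Fin n) : link E u v = link E v u := by
  ext w; rw [mem_link_iff, mem_link_iff, tri_comm]

lemma mem_link_symm {u v w : Fin n} (h : w ∈ link E u v) : w ∈ link E v u := by
  rwa [link_comm]

lemma edge_nes (hE : isEdgeSet E) {a b c : Fin n} (h : ({a,b,c} : Finset (Fin n)) ∈ E) :
    a ≠ b ∧ a ≠ c ∧ b ≠ c := by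
  have h3 := hE _ h
  refine ⟨?_, ?_, ?_⟩ <;> rintro rfl
  · rw [Finset.insert_idem] at h3
    have := Finset.card_insert_le a ({c} : Finset (Fin n))
    simp at this; omega
  · rw [tri_right, Finset.insert_idem] at h3
    have := Finset.card_insert_le a ({b} : Finset (Fin n))
    simp at this; omega
  · rw [tri_rot, Finset.insert_idem] at h3
    have := Finset.card_insert_le b ({a} : Finset (Fin n))
    simp at this; omega

lemma p4 (hE : isEdgeSet E) (hC5 : ¬ hasC5 E) {x y z t w : Fin n}
    (h1 : w ∈ link E x y) (h2 : w ∈ link E y z) (h3 : w ∈ link E z t)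
    (h4 : x ∈ link E z t) (h5 : y ∈ link E t x) : False := by
  rw [mem_link_iff] at h1 h2 h3 h4 h5
  obtain ⟨hxy, hxw, hyw⟩ := edge_nes hE h1
  obtain ⟨hyz, -, hzw⟩ := edge_nes hE h2
  obtain ⟨hzt, -, htw⟩ := edge_nes hE h3
  obtain ⟨-, hzx, htx⟩ := edge_nes hE h4
  obtain ⟨-, hty, -⟩ := edge_nes hE h5
  refine hC5 ⟨x, y, w, z, t, hxy, hxw, hzx.symm, htx.symm, hyw, hyz, hty.symm,
    hzw.symm, htw.symm, hzt, h1, ?_, ?_, h4, h5⟩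
  · rwa [tri_right] at h2
  · rwa [tri_rot, tri_rot] at h3

lemma link_mems_of_edge {a b c : Fin n} (h : ({a,b,c} : Finset (Fin n)) ∈ E) :
    c ∈ link E a b ∧ c ∈ link E b a ∧ b ∈ link E a c ∧ b ∈ link E c a ∧
    a ∈ link E b c ∧ a ∈ link E c b := by
  refine ⟨?_, ?_, ?_, ?_, ?_, ?_⟩ <;> rw [mem_link_iff]
  · exact h
  · rw [tri_comm]; exact h
  · rw [tri_right]; exact h
  · rw [tri_rot]; exact h
  · rw [tri_rot, tri_rot]; exact h
  · rw [tri_comm, tri_rot, tri_rot]; exact h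

lemma mem_Aset_sorted {u v r w : Fin n} :
    w ∈ Aset E u v r ↔ (w ∈ link E u v ∧ w ∈ link E u r ∧ w ∈ link E v r) := by
  unfold Aset
  rw [Finset.mem_inter, Finset.mem_inter, link_comm r u]
  tauto

lemma mem_Bset_iff {u p q r w : Fin n} :
    w ∈ Bset E u p q r ↔ (w ∈ link E u p ∧ w ∈ link E u q ∧ w ∈ link E u r) := by
  unfold Bset
  rw [Finset.mem_inter, Finset.mem_inter]
  tauto

lemma Aset_swap12 (u v r : Fin n) : Aset E u v r = Aset E v u r := by
  ext w; rw [mem_Aset_sorted, mem_Aset_sorted, link_comm v u]; tauto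

lemma Aset_swap23 (u v r : Fin n) : Aset E u v r = Aset E u r v := by
  ext w; rw [mem_Aset_sorted, mem_Aset_sorted, link_comm r v]; tauto

lemma Bset_swap12 (u p q r : Fin n) : Bset E u p q r = Bset E u q p r := by
  ext w; rw [mem_Bset_iff, mem_Bset_iff]; tauto

lemma Bset_swap23 (u p q r : Fin n) : Bset E u p q r = Bset E u p r q := by
  ext w; rw [mem_Bset_iff, mem_Bset_iff]; tauto

lemma K4_swap12 {a b c d : Fin n} (h : isK4 E a b c d) : isK4 E b a c d := by
  obtain ⟨n1, n2, n3, n4, n5, n6, f1, f2, f3, f4⟩ := h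
  exact ⟨n1.symm, n4, n5, n2, n3, n6,
    by rw [tri_comm]; exact f1, by rw [tri_comm]; exact f2, f4, f3⟩

lemma K4_swap23 {a b c d : Fin n} (h : isK4 E a b c d) : isK4 E a c b d := by
  obtain ⟨n1, n2, n3, n4, n5, n6, f1, f2, f3, f4⟩ := h
  exact ⟨n2, n1, n3, n4.symm, n6, n5,
    by rw [tri_right]; exact f1, f3, f2, by rw [tri_comm]; exact f4⟩

lemma K4_swap34 {a b c d : Fin n} (h : isK4 E a b c d) : isK4 E a b d c := by
  obtain ⟨n1, n2, n3, n4, n5, n6, f1, f2, f3, f4⟩ := h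
  exact ⟨n1, n3, n2, n5, n4, n6.symm,
    f2, f1, by rw [tri_right]; exact f3, by rw [tri_right]; exact f4⟩

lemma card_ite (s : Finset (Fin n)) :
    s.card = ∑ w : Fin n, (if w ∈ s then 1 else 0) := by
  simp [Finset.sum_ite_mem]

end

lemma master (P1 P2 P3 P4 P5 P6 : Prop) [Decidable P1] [Decidable P2] [Decidable P3]
    [Decidable P4] [Decidable P5] [Decidable P6]
    (p125 : ¬(P1 ∧ P2 ∧ P5)) (p126 : ¬(P1 ∧ P2 ∧ P6)) (p134 : ¬(P1 ∧ P3 ∧ P4))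
    (p136 : ¬(P1 ∧ P3 ∧ P6)) (p146 : ¬(P1 ∧ P4 ∧ P6)) (p156 : ¬(P1 ∧ P5 ∧ P6))
    (p234 : ¬(P2 ∧ P3 ∧ P4)) (p235 : ¬(P2 ∧ P3 ∧ P5)) (p245 : ¬(P2 ∧ P4 ∧ P5))
    (p256 : ¬(P2 ∧ P5 ∧ P6)) (p345 : ¬(P3 ∧ P4 ∧ P5)) (p346 : ¬(P3 ∧ P4 ∧ P6)) :
    ((if P1 then 1 else 0) + (if P2 then 1 else 0) + (if P3 then 1 else 0)
      + (if P4 then 1 else 0) + (if P5 then 1 else 0) + (if P6 then 1 else 0) ≤ 3) ∧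
    (((if P1 then 1 else 0) + (if P2 then 1 else 0) + (if P3 then 1 else 0)
      + (if P4 then 1 else 0) + (if P5 then 1 else 0) + (if P6 then 1 else 0) = 3) →
      ((if P1 then 1 else 0) =
        (if P1 ∧ P3 ∧ P5 then 1 else 0) + (if P1 ∧ P2 ∧ P4 then 1 else 0)
        + (if P1 ∧ P2 ∧ P3 then 1 else 0) + (if P1 ∧ P4 ∧ P5 then 1 else 0)) ∧
      ((P4 ∧ P5 ∧ P6) ∨ (P2 ∧ P3 ∧ P6) ∨ (P1 ∧ P3 ∧ P5) ∨ (P1 ∧ P2 ∧ P4) ∨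
       (P1 ∧ P2 ∧ P3) ∨ (P1 ∧ P4 ∧ P5) ∨ (P2 ∧ P4 ∧ P6) ∨ (P3 ∧ P5 ∧ P6))) := by
  by_cases h1 : P1 <;> by_cases h2 : P2 <;> by_cases h3 : P3 <;>
    by_cases h4 : P4 <;> by_cases h5 : P5 <;> by_cases h6 : P6 <;> simp_all
lemma engine {n : ℕ} {E : Finset (Finset (Fin n))} (hE : isEdgeSet E) (hC5 : ¬ hasC5 E)
    (hdeg : ∀ u v : Fin n, (link E u v).Nonempty → n ≤ 2 * (link E u v).card)
    {x y z t : Fin n} (hK4 : isK4 E x y z t) :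
    2 * (link E x y).card = n ∧
    (link E x y).card = (Aset E x y t).card + (Aset E x y z).card
      + (Bset E x y z t).card + (Bset E y x z t).card ∧
    (∀ w : Fin n, w ∈ Aset E y z t ∨ w ∈ Aset E x z t ∨ w ∈ Aset E x y t ∨ w ∈ Aset E x y z ∨
      w ∈ Bset E x y z t ∨ w ∈ Bset E y x z t ∨ w ∈ Bset E z x y t ∨ w ∈ Bset E t x y z) := by
  obtain ⟨hxy, hxz, hxt, hyz, hyt, hzt, f1, f2, f3, f4⟩ := hK4
  have m1 := link_mems_of_edge (E := E) f1
  have m2 := link_mems_of_edge (E := E) f2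
  have m3 := link_mems_of_edge (E := E) f3
  have m4 := link_mems_of_edge (E := E) f4
  -- the twelve path exclusions
  have e125 : ∀ w : Fin n, ¬(w ∈ link E x y ∧ w ∈ link E x z ∧ w ∈ link E y t) :=
    fun w ⟨h1, h2, h5⟩ => p4 hE hC5 (mem_link_symm h2) h1 h5 m4.2.2.1 m3.2.2.2.2.2
  have e126 : ∀ w : Fin n, ¬(w ∈ link E x y ∧ w ∈ link E x z ∧ w ∈ link E z t) :=
    fun w ⟨h1, h2, h6⟩ => p4 hE hC5 (mem_link_symm h1) h2 h6 m4.2.2.2.2.1 m2.2.2.2.2.2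
  have e134 : ∀ w : Fin n, ¬(w ∈ link E x y ∧ w ∈ link E x t ∧ w ∈ link E y z) :=
    fun w ⟨h1, h3, h4⟩ => p4 hE hC5 (mem_link_symm h3) h1 h4 m4.1 m3.2.2.2.2.1
  have e136 : ∀ w : Fin n, ¬(w ∈ link E x y ∧ w ∈ link E x t ∧ w ∈ link E z t) :=
    fun w ⟨h1, h3, h6⟩ => p4 hE hC5 (mem_link_symm h1) h3 (mem_link_symm h6) m4.2.2.2.2.2 m1.2.2.2.2.2
  have e146 : ∀ w : Fin n, ¬(w ∈ link E x y ∧ w ∈ link E y z ∧ w ∈ link E z t) :=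
    fun w ⟨h1, h4, h6⟩ => p4 hE hC5 h1 h4 h6 m3.2.2.2.2.1 m2.2.2.2.1
  have e156 : ∀ w : Fin n, ¬(w ∈ link E x y ∧ w ∈ link E y t ∧ w ∈ link E z t) :=
    fun w ⟨h1, h5, h6⟩ => p4 hE hC5 h1 h5 (mem_link_symm h6) m3.2.2.2.2.2 m1.2.2.2.1
  have e234 : ∀ w : Fin n, ¬(w ∈ link E x z ∧ w ∈ link E x t ∧ w ∈ link E y z) :=
    fun w ⟨h2, h3, h4⟩ => p4 hE hC5 h4 (mem_link_symm h2) h3 m2.2.2.1 m4.2.2.2.1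
  have e235 : ∀ w : Fin n, ¬(w ∈ link E x z ∧ w ∈ link E x t ∧ w ∈ link E y t) :=
    fun w ⟨h2, h3, h5⟩ => p4 hE hC5 (mem_link_symm h2) h3 (mem_link_symm h5) m4.2.2.2.1 m1.2.2.2.2.1
  have e245 : ∀ w : Fin n, ¬(w ∈ link E x z ∧ w ∈ link E y z ∧ w ∈ link E y t) :=
    fun w ⟨h2, h4, h5⟩ => p4 hE hC5 h2 (mem_link_symm h4) h5 m2.2.2.2.2.1 m3.2.2.2.1
  have e256 : ∀ w : Fin n, ¬(w ∈ link E x z ∧ w ∈ link E y t ∧ w ∈ link E z t) :=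
    fun w ⟨h2, h5, h6⟩ => p4 hE hC5 h2 h6 (mem_link_symm h5) m2.2.2.2.2.2 m1.2.1
  have e345 : ∀ w : Fin n, ¬(w ∈ link E x t ∧ w ∈ link E y z ∧ w ∈ link E y t) :=
    fun w ⟨h3, h4, h5⟩ => p4 hE hC5 h3 (mem_link_symm h5) h4 m1.2.2.2.2.1 m3.2.1
  have e346 : ∀ w : Fin n, ¬(w ∈ link E x t ∧ w ∈ link E y z ∧ w ∈ link E z t) :=
    fun w ⟨h3, h4, h6⟩ => p4 hE hC5 h3 (mem_link_symm h6) (mem_link_symm h4) m1.2.2.2.2.2 m2.2.1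
  have masterw := fun w : Fin n => master (w ∈ link E x y) (w ∈ link E x z) (w ∈ link E x t)
    (w ∈ link E y z) (w ∈ link E y t) (w ∈ link E z t)
    (e125 w) (e126 w) (e134 w) (e136 w) (e146 w) (e156 w)
    (e234 w) (e235 w) (e245 w) (e256 w) (e345 w) (e346 w)
  -- counting
  have hS : (link E x y).card + (link E x z).card + (link E x t).card
      + (link E y z).card + (link E y t).card + (link E z t).card
      = ∑ w : Fin n, ((if w ∈ link E x y then 1 else 0) + (if w ∈ link E x z then 1 else 0)
        + (if w ∈ link E x t then 1 else 0) + (if w ∈ link E y z then 1 else 0)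
        + (if w ∈ link E y t then 1 else 0) + (if w ∈ link E z t then 1 else 0)) := by
    simp only [Finset.sum_add_distrib, ← card_ite]
  have hSle : (∑ w : Fin n, ((if w ∈ link E x y then 1 else 0) + (if w ∈ link E x z then 1 else 0)
        + (if w ∈ link E x t then 1 else 0) + (if w ∈ link E y z then 1 else 0)
        + (if w ∈ link E y t then 1 else 0) + (if w ∈ link E z t then 1 else 0)))
      ≤ 3 * n := by
    calc _ ≤ ∑ _w : Fin n, 3 := Finset.sum_le_sum (fun w _ => (masterw w).1)
    _ = 3 * n := by simp [Finset.sum_const, Finset.card_univ, Nat.mul_comm]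
  have hd1 := hdeg x y ⟨z, m1.1⟩
  have hd2 := hdeg x z ⟨y, m1.2.2.1⟩
  have hd3 := hdeg x t ⟨y, m2.2.2.1⟩
  have hd4 := hdeg y z ⟨x, m1.2.2.2.2.1⟩
  have hd5 := hdeg y t ⟨x, m2.2.2.2.2.1⟩
  have hd6 := hdeg z t ⟨x, m3.2.2.2.2.1⟩
  have key : 2 * (link E x y).card = n ∧ 2 * (link E x z).card = n ∧ 2 * (link E x t).card = n
      ∧ 2 * (link E y z).card = n ∧ 2 * (link E y t).card = n ∧ 2 * (link E z t).card = n ∧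
      (∑ w : Fin n, ((if w ∈ link E x y then 1 else 0) + (if w ∈ link E x z then 1 else 0)
        + (if w ∈ link E x t then 1 else 0) + (if w ∈ link E y z then 1 else 0)
        + (if w ∈ link E y t then 1 else 0) + (if w ∈ link E z t then 1 else 0))) = 3 * n := by
    omega
  have hcnt3 : ∀ w : Fin n, (if w ∈ link E x y then 1 else 0) + (if w ∈ link E x z then 1 else 0)
      + (if w ∈ link E x t then 1 else 0) + (if w ∈ link E y z then 1 else 0)
      + (if w ∈ link E y t then 1 else 0) + (if w ∈ link E z t then 1 else 0) = 3 := by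
    by_contra hcon
    push_neg at hcon
    obtain ⟨w0, hw0⟩ := hcon
    have hlt := lt_of_le_of_ne (masterw w0).1 hw0
    have hstrict := Finset.sum_lt_sum (s := Finset.univ)
      (f := fun w : Fin n => (if w ∈ link E x y then 1 else 0) + (if w ∈ link E x z then 1 else 0)
        + (if w ∈ link E x t then 1 else 0) + (if w ∈ link E y z then 1 else 0)
        + (if w ∈ link E y t then 1 else 0) + (if w ∈ link E z t then 1 else 0))
      (g := fun _ => 3) (fun i _ => (masterw i).1) ⟨w0, Finset.mem_univ w0, hlt⟩
    have hconst : (∑ _w : Fin n, 3) = 3 * n := by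
      simp [Finset.sum_const, Finset.card_univ, Nat.mul_comm]
    rw [hconst] at hstrict
    beta_reduce at hstrict
    omega
  refine ⟨key.1, ?_, ?_⟩
  · have hpoint : ∀ w : Fin n, (if w ∈ link E x y then 1 else 0)
        = (if w ∈ Aset E x y t then 1 else 0) + (if w ∈ Aset E x y z then 1 else 0)
        + (if w ∈ Bset E x y z t then 1 else 0) + (if w ∈ Bset E y x z t then 1 else 0) := by
      intro w
      have hm := ((masterw w).2 (hcnt3 w)).1
      have a1 : w ∈ Aset E x y t ↔ (w ∈ link E x y ∧ w ∈ link E x t ∧ w ∈ link E y t) :=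
        mem_Aset_sorted
      have a2 : w ∈ Aset E x y z ↔ (w ∈ link E x y ∧ w ∈ link E x z ∧ w ∈ link E y z) :=
        mem_Aset_sorted
      have b1 : w ∈ Bset E x y z t ↔ (w ∈ link E x y ∧ w ∈ link E x z ∧ w ∈ link E x t) :=
        mem_Bset_iff
      have b2 : w ∈ Bset E y x z t ↔ (w ∈ link E x y ∧ w ∈ link E y z ∧ w ∈ link E y t) := by
        rw [mem_Bset_iff, link_comm y x]
      simp only [a1, a2, b1, b2]
      exact hm
    calc (link E x y).card = ∑ w : Fin n, (if w ∈ link E x y then 1 else 0) := card_ite _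
      _ = ∑ w : Fin n, ((if w ∈ Aset E x y t then 1 else 0) + (if w ∈ Aset E x y z then 1 else 0)
          + (if w ∈ Bset E x y z t then 1 else 0) + (if w ∈ Bset E y x z t then 1 else 0)) :=
        Finset.sum_congr rfl (fun w _ => hpoint w)
      _ = _ := by simp only [Finset.sum_add_distrib, ← card_ite]
  · intro w
    have hm := ((masterw w).2 (hcnt3 w)).2
    simp only [mem_Aset_sorted, mem_Bset_iff, link_comm y x, link_comm z x, link_comm z y,
      link_comm t x, link_comm t y, link_comm t z]
    exact hm
lemma fact3 {n : ℕ} {E : Finset (Finset (Fin n))} (hE : isEdgeSet E) (hC5 : ¬ hasC5 E)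
    (hdeg : ∀ u v : Fin n, (link E u v).Nonempty → n ≤ 2 * (link E u v).card)
    {x y z t a : Fin n} (hK4 : isK4 E x y z t) (ha : a ∈ Bset E x y z t) :
    n + 2 ≤ 2 * ((Aset E y z t).card + (Aset E x z t).card
      + (Bset E x y z t).card + (Bset E y x z t).card) := by
  obtain ⟨ha1, ha2, ha3⟩ := mem_Bset_iff.1 ha
  have hclass := (engine hE hC5 hdeg hK4).2.2
  have la1 := link_mems_of_edge (E := E) (mem_link_iff.1 ha1)
  have hxN : x ∈ link E a y := la1.2.2.2.2.2
  have hdegN := hdeg a y ⟨x, hxN⟩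
  have excl1 : ∀ w : Fin n, w ∈ link E a y → w ∈ link E x z → w ∈ link E y z → False := by
    intro w hw h2 h4
    have lw := link_mems_of_edge (E := E) (mem_link_iff.1 hw)
    have l4 := link_mems_of_edge (E := E) (mem_link_iff.1 h4)
    exact p4 hE hC5 lw.2.2.2.2.2 la1.2.1 ha2 h2 l4.2.2.2.2.1
  have excl2 : ∀ w : Fin n, w ∈ link E a y → w ∈ link E x t → w ∈ link E y t → False := by
    intro w hw h3 h5
    have lw := link_mems_of_edge (E := E) (mem_link_iff.1 hw)
    have l5 := link_mems_of_edge (E := E) (mem_link_iff.1 h5)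
    exact p4 hE hC5 lw.2.2.2.2.2 la1.2.1 ha3 h3 l5.2.2.2.2.1
  have hsub : link E a y ⊆
      (Aset E y z t ∪ Aset E x z t ∪ Bset E x y z t ∪ Bset E y x z t).erase a := by
    intro w hw
    have hnes := edge_nes hE (mem_link_iff.1 hw)
    refine Finset.mem_erase.2 ⟨hnes.2.1.symm, ?_⟩
    simp only [Finset.mem_union]
    rcases hclass w with h|h|h|h|h|h|h|h
    · exact Or.inl (Or.inl (Or.inl h))
    · exact Or.inl (Or.inl (Or.inr h))
    · obtain ⟨-, hb, hc⟩ := mem_Aset_sorted.1 h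
      exact (excl2 w hw hb hc).elim
    · obtain ⟨-, hb, hc⟩ := mem_Aset_sorted.1 h
      exact (excl1 w hw hb hc).elim
    · exact Or.inl (Or.inr h)
    · exact Or.inr h
    · obtain ⟨hb, hc, -⟩ := mem_Bset_iff.1 h
      exact (excl1 w hw (mem_link_symm hb) (mem_link_symm hc)).elim
    · obtain ⟨hb, hc, -⟩ := mem_Bset_iff.1 h
      exact (excl2 w hw (mem_link_symm hb) (mem_link_symm hc)).elim
  have haU : a ∈ Aset E y z t ∪ Aset E x z t ∪ Bset E x y z t ∪ Bset E y x z t := by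
    simp only [Finset.mem_union]
    exact Or.inl (Or.inr ha)
  have hcard1 := Finset.card_le_card hsub
  rw [Finset.card_erase_of_mem haU] at hcard1
  have hUpos : 1 ≤ (Aset E y z t ∪ Aset E x z t ∪ Bset E x y z t ∪ Bset E y x z t).card :=
    Finset.card_pos.2 ⟨a, haU⟩
  have h1 := Finset.card_union_le (Aset E y z t) (Aset E x z t)
  have h2 := Finset.card_union_le (Aset E y z t ∪ Aset E x z t) (Bset E x y z t)
  have h3 := Finset.card_union_le (Aset E y z t ∪ Aset E x z t ∪ Bset E x y z t) (Bset E y x z t)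
  omega

/-- if the minimum positive co-degree equals exactly `n/2`, then at most
one of `B_i, B_j, B_k, B_l` is non-empty; and if all four are empty then `4 ∣ n`. -/
theorem stmt_12 (n : ℕ) (E : Finset (Finset (Fin n))) (hE : isEdgeSet E)
    (hC5free : ¬ hasC5 E)
    (hdeg : ∀ u v : Fin n, (link E u v).Nonempty → n ≤ 2 * (link E u v).card)
    (hexact : ∃ u v : Fin n, (link E u v).Nonempty ∧ 2 * (link E u v).card = n)
    (vi vj vk vl : Fin n) (hK4 : isK4 E vi vj vk vl) :
    let Bi := Bset E vi vj vk vl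
    let Bj := Bset E vj vi vk vl
    let Bk := Bset E vk vi vj vl
    let Bl := Bset E vl vi vj vk
    (¬ (Bi.Nonempty ∧ Bj.Nonempty) ∧ ¬ (Bi.Nonempty ∧ Bk.Nonempty) ∧
     ¬ (Bi.Nonempty ∧ Bl.Nonempty) ∧ ¬ (Bj.Nonempty ∧ Bk.Nonempty) ∧
     ¬ (Bj.Nonempty ∧ Bl.Nonempty) ∧ ¬ (Bk.Nonempty ∧ Bl.Nonempty)) ∧
    (Bi = ∅ → Bj = ∅ → Bk = ∅ → Bl = ∅ → 4 ∣ n) := by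
  intro Bi Bj Bk Bl
  have K_ik := K4_swap23 hK4
  have K_ji := K4_swap12 hK4
  have K_jl := K4_swap23 (K4_swap34 (K4_swap12 hK4))
  have K_kl := K4_swap23 (K4_swap34 (K4_swap12 (K4_swap23 hK4)))
  have K_lk := K4_swap12 K_kl
  have K_ki := K4_swap12 K_ik
  have K_lj := K4_swap12 K_jl
  have K_il := K4_swap23 (K4_swap34 hK4)
  have dec1 := engine hE hC5free hdeg hK4
  have dec6 := engine hE hC5free hdeg K_kl
  have dec2 := engine hE hC5free hdeg K_ik
  have dec3 := engine hE hC5free hdeg K_il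
  simp only [Aset_swap12, Aset_swap23, Bset_swap12, Bset_swap23] at dec6 dec2 dec3
  have d1a := dec1.1
  have d1b := dec1.2.1
  have d6a := dec6.1
  have d6b := dec6.2.1
  constructor
  · refine ⟨?_, ?_, ?_, ?_, ?_, ?_⟩
    · rintro ⟨⟨a, ha⟩, ⟨b, hb⟩⟩
      have ha' : a ∈ Bset E vi vj vk vl := ha
      have hb' : b ∈ Bset E vj vi vk vl := hb
      have F1 := fact3 hE hC5free hdeg K_ik
        (show a ∈ Bset E vi vk vj vl by simp only [Bset_swap12, Bset_swap23]; exact ha')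
      have F2 := fact3 hE hC5free hdeg K_jl
        (show b ∈ Bset E vj vl vi vk by simp only [Bset_swap12, Bset_swap23]; exact hb')
      simp only [Aset_swap12, Aset_swap23, Bset_swap12, Bset_swap23] at F1 F2
      omega
    · rintro ⟨⟨a, ha⟩, ⟨c, hc⟩⟩
      have ha' : a ∈ Bset E vi vj vk vl := ha
      have hc' : c ∈ Bset E vk vi vj vl := hc
      have F1 := fact3 hE hC5free hdeg hK4 ha'
      have F2 := fact3 hE hC5free hdeg K_kl
        (show c ∈ Bset E vk vl vi vj by simp only [Bset_swap12, Bset_swap23]; exact hc')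
      simp only [Aset_swap12, Aset_swap23, Bset_swap12, Bset_swap23] at F1 F2
      omega
    · rintro ⟨⟨a, ha⟩, ⟨d, hd⟩⟩
      have ha' : a ∈ Bset E vi vj vk vl := ha
      have hd' : d ∈ Bset E vl vi vj vk := hd
      have F1 := fact3 hE hC5free hdeg hK4 ha'
      have F2 := fact3 hE hC5free hdeg K_lk
        (show d ∈ Bset E vl vk vi vj by simp only [Bset_swap12, Bset_swap23]; exact hd')
      simp only [Aset_swap12, Aset_swap23, Bset_swap12, Bset_swap23] at F1 F2
      omega
    · rintro ⟨⟨b, hb⟩, ⟨c, hc⟩⟩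
      have hb' : b ∈ Bset E vj vi vk vl := hb
      have hc' : c ∈ Bset E vk vi vj vl := hc
      have F1 := fact3 hE hC5free hdeg K_ji hb'
      have F2 := fact3 hE hC5free hdeg K_kl
        (show c ∈ Bset E vk vl vi vj by simp only [Bset_swap12, Bset_swap23]; exact hc')
      simp only [Aset_swap12, Aset_swap23, Bset_swap12, Bset_swap23] at F1 F2
      omega
    · rintro ⟨⟨b, hb⟩, ⟨d, hd⟩⟩
      have hb' : b ∈ Bset E vj vi vk vl := hb
      have hd' : d ∈ Bset E vl vi vj vk := hd
      have F1 := fact3 hE hC5free hdeg K_ji hb'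
      have F2 := fact3 hE hC5free hdeg K_lk
        (show d ∈ Bset E vl vk vi vj by simp only [Bset_swap12, Bset_swap23]; exact hd')
      simp only [Aset_swap12, Aset_swap23, Bset_swap12, Bset_swap23] at F1 F2
      omega
    · rintro ⟨⟨c, hc⟩, ⟨d, hd⟩⟩
      have hc' : c ∈ Bset E vk vi vj vl := hc
      have hd' : d ∈ Bset E vl vi vj vk := hd
      have F1 := fact3 hE hC5free hdeg K_ki hc'
      have F2 := fact3 hE hC5free hdeg K_lj
        (show d ∈ Bset E vl vj vi vk by simp only [Bset_swap12, Bset_swap23]; exact hd')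
      simp only [Aset_swap12, Aset_swap23, Bset_swap12, Bset_swap23] at F1 F2
      omega
  · intro h1 h2 h3 h4
    have e1 : Bset E vi vj vk vl = ∅ := h1
    have e2 : Bset E vj vi vk vl = ∅ := h2
    have e3 : Bset E vk vi vj vl = ∅ := h3
    have e4 : Bset E vl vi vj vk = ∅ := h4
    have d2a := dec2.1
    have d2b := dec2.2.1
    have d3a := dec3.1
    have d3b := dec3.2.1
    rw [e1, e2] at d1b
    rw [e1, e3] at d2b
    rw [e1, e4] at d3b
    simp only [Finset.card_empty] at d1b d2b d3b
    omega
end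

section
/- Let H be an n-vertex C5-free 3-graph with δ2^+(H) = n/2 containing a K4 on v1, v2, v3, v4 with B_1 = B_1^{234} ≠ ∅. Suppose v5, v6 ∈ B_1^{234} and v1, v2, v5, v6 form a K4. Then A_1^{234} ⊆ A_1^{256} and B_1^{256} ≠ ∅, where A_1^{256} and B_1^{256} are the corresponding triple intersections of links for the K4 on v1, v2, v5, v6. -/
open Finset

section helpers
variable {n : ℕ} {E : Finset (Finset (Fin n))}

lemma mem_link {u v w : Fin n} : w ∈ link E u v ↔ ({u, v, w} : Finset (Fin n)) ∈ E := by
  simp [link]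

lemma p213 {x y z : Fin n} (h : ({x, y, z} : Finset (Fin n)) ∈ E) :
    ({y, x, z} : Finset (Fin n)) ∈ E := by
  have he : ({y, x, z} : Finset (Fin n)) = {x, y, z} := by ext t; simp; tauto
  rwa [he]

lemma p231 {x y z : Fin n} (h : ({x, y, z} : Finset (Fin n)) ∈ E) :
    ({y, z, x} : Finset (Fin n)) ∈ E := by
  have he : ({y, z, x} : Finset (Fin n)) = {x, y, z} := by ext t; simp; tauto
  rwa [he]

lemma linkc {x y : Fin n} : link E x y = link E y x := by
  ext u
  simp only [link, Finset.mem_filter]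
  have he : ({x, y, u} : Finset (Fin n)) = {y, x, u} := by ext t; simp; tauto
  rw [he]

lemma tne (hE : isEdgeSet E) {x y z : Fin n} (h : ({x, y, z} : Finset (Fin n)) ∈ E) :
    x ≠ y ∧ x ≠ z ∧ y ≠ z := by
  have h3 := hE _ h
  refine ⟨?_, ?_, ?_⟩ <;> rintro rfl
  · have he : ({x, x, z} : Finset (Fin n)) = insert x {z} := by ext t; simp; try tauto
    rw [he] at h3
    have := Finset.card_insert_le x ({z} : Finset (Fin n))
    simp at this; omega
  · have he : ({x, y, x} : Finset (Fin n)) = insert x {y} := by ext t; simp; try tauto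
    rw [he] at h3
    have := Finset.card_insert_le x ({y} : Finset (Fin n))
    simp at this; omega
  · have he : ({x, y, y} : Finset (Fin n)) = insert x {y} := by ext t; simp; try tauto
    rw [he] at h3
    have := Finset.card_insert_le x ({y} : Finset (Fin n))
    simp at this; omega

lemma pathC5 (hE : isEdgeSet E) (hC5 : ¬ hasC5 E) {p q u r s : Fin n}
    (e1 : ({p, q, u} : Finset (Fin n)) ∈ E) (e2 : ({q, u, r} : Finset (Fin n)) ∈ E)
    (e3 : ({u, r, s} : Finset (Fin n)) ∈ E) (e4 : ({r, s, p} : Finset (Fin n)) ∈ E)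
    (e5 : ({s, p, q} : Finset (Fin n)) ∈ E) : False := by
  obtain ⟨hpq, hpu, hqu⟩ := tne hE e1
  obtain ⟨hqu', hqr, hur⟩ := tne hE e2
  obtain ⟨_, hus, hrs⟩ := tne hE e3
  obtain ⟨_, hrp, hsp⟩ := tne hE e4
  obtain ⟨_, hsq, _⟩ := tne hE e5
  exact hC5 ⟨p, q, u, r, s, hpq, hpu, hrp.symm, hsp.symm, hqu, hqr, hsq.symm, hur, hus, hrs,
    e1, e2, e3, e4, e5⟩

lemma part {X Y : Finset (Fin n)} (hXY : X ∩ Y = ∅) (hX : n ≤ 2 * X.card)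
    (hY : n ≤ 2 * Y.card) (u : Fin n) : u ∈ X ∨ u ∈ Y := by
  have hd : Disjoint X Y := Finset.disjoint_iff_inter_eq_empty.mpr hXY
  have hu : (X ∪ Y).card = X.card + Y.card := Finset.card_union_of_disjoint hd
  have hle : (X ∪ Y).card ≤ n := by
    have := Finset.card_le_card (Finset.subset_univ (X ∪ Y))
    simpa using this
  have huniv : X ∪ Y = Finset.univ := by
    apply Finset.eq_univ_of_card
    simp only [Fintype.card_fin]
    omega
  have : u ∈ X ∪ Y := huniv ▸ Finset.mem_univ u
  exact Finset.mem_union.mp this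

lemma ineq (hE : isEdgeSet E) (hC5 : ¬ hasC5 E)
    (hdeg : ∀ u v : Fin n, (link E u v).Nonempty → n ≤ 2 * (link E u v).card)
    {w1 w2 w3 w4 : Fin n} (hK4 : isK4 E w1 w2 w3 w4) :
    (link E w1 w3 ∩ link E w2 w4).card + (link E w1 w4 ∩ link E w2 w3).card
      ≤ (link E w1 w2 ∩ link E w3 w4).card := by
  obtain ⟨h12, h13, h14, h23, h24, h34, e123, e124, e134, e234⟩ := hK4
  have hn12 : n ≤ 2 * (link E w1 w2).card :=
    hdeg w1 w2 ⟨w3, mem_link.mpr e123⟩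
  have hn34 : n ≤ 2 * (link E w3 w4).card :=
    hdeg w3 w4 ⟨w1, mem_link.mpr (p231 e134)⟩
  set A := link E w1 w2 with hA
  set B := link E w3 w4 with hB
  set M2 := link E w1 w3 ∩ link E w2 w4 with hM2
  set M3 := link E w1 w4 ∩ link E w2 w3 with hM3
  have hdAB : (A ∪ B) ∩ (M2 ∪ M3) = ∅ := by
    rw [Finset.eq_empty_iff_forall_notMem]
    intro u hu
    simp only [Finset.mem_inter, Finset.mem_union, hA, hB, hM2, hM3, Finset.mem_inter,
      mem_link] at hu
    obtain ⟨hab, hm⟩ := hu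
    rcases hab with hab | hab <;> rcases hm with ⟨ha, hb⟩ | ⟨ha, hb⟩
    · -- u ∈ L12, L13, L24 : C5 (w4, w2, u, w1, w3)
      exact pathC5 hE hC5 (p213 hb) (p231 hab) (p231 (p231 ha)) e134 (p231 e234)
    · -- u ∈ L12, L14, L23 : C5 (w3, w2, u, w1, w4)
      exact pathC5 hE hC5 (p213 hb) (p231 hab) (p231 (p231 ha)) (p231 (p213 e134))
        (p213 (p231 e234))
    · -- u ∈ L34, L13, L24 : C5 (w2, w4, u, w3, w1)
      exact pathC5 hE hC5 hb (p231 hab) (p213 (p231 ha)) (p231 (p231 e123)) e124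
    · -- u ∈ L34, L14, L23 : C5 (w2, w3, u, w4, w1)
      exact pathC5 hE hC5 hb (p231 (p213 hab)) (p213 (p231 ha)) (p231 (p231 e124)) e123
  have hdM : M2 ∩ M3 = ∅ := by
    rw [Finset.eq_empty_iff_forall_notMem]
    intro u hu
    simp only [hM2, hM3, Finset.mem_inter, mem_link] at hu
    obtain ⟨⟨h13u, h24u⟩, ⟨h14u, _⟩⟩ := hu
    -- C5 (w3, w1, u, w4, w2)
    exact pathC5 hE hC5 (p213 h13u) (p231 (p213 h14u)) (p213 (p231 h24u))
      (p231 (p231 e234)) (p231 e123)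
  have h1 : (A ∪ B).card + (A ∩ B).card = A.card + B.card :=
    Finset.card_union_add_card_inter A B
  have h2 : (M2 ∪ M3).card = M2.card + M3.card :=
    Finset.card_union_of_disjoint (Finset.disjoint_iff_inter_eq_empty.mpr hdM)
  have h3 : ((A ∪ B) ∪ (M2 ∪ M3)).card = (A ∪ B).card + (M2 ∪ M3).card :=
    Finset.card_union_of_disjoint (Finset.disjoint_iff_inter_eq_empty.mpr hdAB)
  have h4 : ((A ∪ B) ∪ (M2 ∪ M3)).card ≤ n := by
    have := Finset.card_le_card (Finset.subset_univ ((A ∪ B) ∪ (M2 ∪ M3)))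
    simpa using this
  omega

lemma k4_1324 {w1 w2 w3 w4 : Fin n} (h : isK4 E w1 w2 w3 w4) : isK4 E w1 w3 w2 w4 := by
  obtain ⟨h12, h13, h14, h23, h24, h34, e123, e124, e134, e234⟩ := h
  exact ⟨h13, h12, h14, h23.symm, h34, h24, p231 (p213 e123), e134, e124, p213 e234⟩

lemma k4_1423 {w1 w2 w3 w4 : Fin n} (h : isK4 E w1 w2 w3 w4) : isK4 E w1 w4 w2 w3 := by
  obtain ⟨h12, h13, h14, h23, h24, h34, e123, e124, e134, e234⟩ := h
  exact ⟨h14, h12, h13, h24.symm, h34.symm, h23, p231 (p213 e124), p231 (p213 e134),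
    e123, p231 (p231 e234)⟩

lemma oppdisj (hE : isEdgeSet E) (hC5 : ¬ hasC5 E)
    (hdeg : ∀ u v : Fin n, (link E u v).Nonempty → n ≤ 2 * (link E u v).card)
    {w1 w2 w3 w4 : Fin n} (hK4 : isK4 E w1 w2 w3 w4) :
    link E w1 w2 ∩ link E w3 w4 = ∅ := by
  have i1 := ineq hE hC5 hdeg hK4
  have i2 := ineq hE hC5 hdeg (k4_1324 hK4)
  have i3 := ineq hE hC5 hdeg (k4_1423 hK4)
  rw [show link E w3 w2 = link E w2 w3 from linkc] at i2
  rw [show link E w4 w3 = link E w3 w4 from linkc,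
    show link E w4 w2 = link E w2 w4 from linkc] at i3
  have : (link E w1 w2 ∩ link E w3 w4).card = 0 := by omega
  exact Finset.card_eq_zero.mp this

end helpers

/-- Fact 9: if `v5, v6 ∈ B_1^{234}` and `v1, v2, v5, v6` form a `K4`,
then `A_1^{234} ⊆ A_1^{256}` and `B_1^{256} ≠ ∅`. -/
theorem stmt_16 (n : ℕ) (E : Finset (Finset (Fin n))) (hE : isEdgeSet E)
    (hC5free : ¬ hasC5 E)
    (hdeg : ∀ u v : Fin n, (link E u v).Nonempty → n ≤ 2 * (link E u v).card)
    (hexact : ∃ u v : Fin n, (link E u v).Nonempty ∧ 2 * (link E u v).card = n)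
    (v1 v2 v3 v4 : Fin n) (hK4 : isK4 E v1 v2 v3 v4)
    (hB1 : (Bset E v1 v2 v3 v4).Nonempty)
    (v5 v6 : Fin n) (h5 : v5 ∈ Bset E v1 v2 v3 v4) (h6 : v6 ∈ Bset E v1 v2 v3 v4)
    (hK4' : isK4 E v1 v2 v5 v6) :
    Aset E v2 v3 v4 ⊆ Aset E v2 v5 v6 ∧ (Bset E v1 v2 v5 v6).Nonempty := by
  have hK4c := hK4
  have hK4'c := hK4'
  obtain ⟨n12, n13, n14, n23, n24, n34, e123, e124, e134, e234⟩ := hK4c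
  obtain ⟨_, n15, n16, n25, n26, n56, e125, e126, e156, e256⟩ := hK4'c
  simp only [Bset, Finset.mem_inter, mem_link] at h5 h6
  obtain ⟨⟨h512, h513⟩, h514⟩ := h5
  obtain ⟨⟨h612, h613⟩, h614⟩ := h6
  constructor
  · -- A_1^{234} ⊆ A_1^{256}
    intro a ha
    simp only [Aset, Finset.mem_inter, mem_link] at ha ⊢
    obtain ⟨⟨ha23, ha34⟩, ha42⟩ := ha
    by_cases hav1 : a = v1
    · subst hav1
      exact ⟨⟨p231 e125, p231 e156⟩, p213 (p231 e126)⟩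
    · -- a ≠ v1
      obtain ⟨hv23, hv2a, hv3a⟩ := tne hE ha23
      obtain ⟨hv34, _, hv4a⟩ := tne hE ha34
      -- a, v2, v3, v4 form a K4
      have hK4a : isK4 E a v2 v3 v4 :=
        ⟨hv2a.symm, hv3a.symm, hv4a.symm, n23, n24, n34,
          p231 (p231 ha23), p213 (p231 ha42), p231 (p231 ha34), e234⟩
      have d12 : link E v1 v2 ∩ link E v3 v4 = ∅ := oppdisj hE hC5free hdeg hK4
      have da2 : link E a v2 ∩ link E v3 v4 = ∅ := oppdisj hE hC5free hdeg hK4a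
      have d1256 : link E v1 v2 ∩ link E v5 v6 = ∅ := oppdisj hE hC5free hdeg hK4'
      have hna2 : n ≤ 2 * (link E a v2).card :=
        hdeg a v2 ⟨v3, mem_link.mpr (p231 (p231 ha23))⟩
      have hn34 : n ≤ 2 * (link E v3 v4).card :=
        hdeg v3 v4 ⟨a, mem_link.mpr ha34⟩
      have hn12 : n ≤ 2 * (link E v1 v2).card :=
        hdeg v1 v2 ⟨v5, mem_link.mpr e125⟩
      have hn56 : n ≤ 2 * (link E v5 v6).card :=
        hdeg v5 v6 ⟨v1, mem_link.mpr (p231 e156)⟩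
      -- v5 and v6 are not in link v3 v4, hence in link a v2
      have h5n34 : v5 ∉ link E v3 v4 := by
        intro hmem
        have : v5 ∈ link E v1 v2 ∩ link E v3 v4 :=
          Finset.mem_inter.mpr ⟨mem_link.mpr h512, hmem⟩
        rw [d12] at this
        exact absurd this (Finset.notMem_empty _)
      have h6n34 : v6 ∉ link E v3 v4 := by
        intro hmem
        have : v6 ∈ link E v1 v2 ∩ link E v3 v4 :=
          Finset.mem_inter.mpr ⟨mem_link.mpr h612, hmem⟩
        rw [d12] at this
        exact absurd this (Finset.notMem_empty _)
      have ha25 : ({a, v2, v5} : Finset (Fin n)) ∈ E :=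
        mem_link.mp ((part da2 hna2 hn34 v5).resolve_right h5n34)
      have ha26 : ({a, v2, v6} : Finset (Fin n)) ∈ E :=
        mem_link.mp ((part da2 hna2 hn34 v6).resolve_right h6n34)
      -- a ∉ link v1 v2 (else C5 on v1 v2 a v3 v4), hence a ∈ link v5 v6
      have han12 : a ∉ link E v1 v2 := by
        intro hmem
        exact pathC5 hE hC5free (mem_link.mp hmem) (p231 (p213 ha23))
          (p231 (p231 ha34)) (p231 e134) (p231 (p231 e124))
      have ha56 : ({v5, v6, a} : Finset (Fin n)) ∈ E :=
        mem_link.mp ((part d1256 hn12 hn56 a).resolve_left han12)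
      exact ⟨⟨p231 ha25, ha56⟩, p213 (p231 ha26)⟩
  · -- B_1^{256} is nonempty: it contains v3
    refine ⟨v3, ?_⟩
    simp only [Bset, Finset.mem_inter, mem_link]
    exact ⟨⟨e123, p231 (p213 h513)⟩, p231 (p213 h613)⟩
end
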